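/- arXiv:math/0205221 — 8 statements merged into one kernel-verified Lean document; each statement's English description precedes it below -/
import Mathlib

section
/- The determinant of the (m+1)×(m+1) matrix whose first m rows are (row i has 1 in column i, -λ_i in column i+1, zeros elsewhere) and whose last row is (E_m, E_{m-1}, ..., E_1, 1), where E_k is the k-th elementary symmetric polynomial in λ_1,...,λ_m, equals 1 + λ_m E_1 + λ_{m-1}λ_m E_2 + ... + λ_1λ_2⋯λ_m E_m. -/
open Finset

/-- The `k`-th elementary symmetric function of `l 0, ..., l (m-1)`. -/
def esymmVal (m : ℕ) (l : Fin m → ℝ) (k : ℕ) : ℝ :=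
  ∑ s ∈ Finset.powersetCard k (Finset.univ : Finset (Fin m)), ∏ i ∈ s, l i

/-- The product of the top `k` values `l (m-k) ⋯ l (m-1)`. -/
def topProd (m : ℕ) (l : Fin m → ℝ) (k : ℕ) : ℝ :=
  ∏ i ∈ Finset.univ.filter (fun i : Fin m => m - k ≤ (i : ℕ)), l i

/-!
Right-multiply by the unipotent upper triangular matrix `U` with `U j k = λ_j ⋯ λ_{k-1}` for
`j ≤ k`. Each column of `U` satisfies `v_i = λ_i v_{i+1}` for `i < k`, so the first `m` rows of the
product are those of the identity, and the product is lower triangular with last diagonal entry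
`∑_j b_j λ_j ⋯ λ_{m-1}`, where `b` is the last row. Hence `det M` is this sum for any last row `b`;
for `b_j = E_{m-j}`, reindexing by `k = m - j` gives the claimed formula.
-/

section

variable {R : Type*} [CommRing R] {m : ℕ}

def bidiagLastRow (l : Fin m → R) (b : Fin (m + 1) → R) : Matrix (Fin (m + 1)) (Fin (m + 1)) R :=
  Matrix.of fun i j =>
    if h : (i : ℕ) < m then
      (if (j : ℕ) = (i : ℕ) then 1 else if (j : ℕ) = (i : ℕ) + 1 then -l ⟨i, h⟩ else 0)
    else b j

theorem bidiagLastRow_castSucc (l : Fin m → R) (b : Fin (m + 1) → R) (i : Fin m)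
    (j : Fin (m + 1)) :
    bidiagLastRow l b i.castSucc j =
      (if j = i.castSucc then 1 else 0) + if j = i.succ then -l i else 0 := by
  have hne : (j : ℕ) = i + 1 → (j : ℕ) ≠ i := by omega
  simp only [bidiagLastRow, Matrix.of_apply, Fin.val_castSucc, i.isLt, dif_pos, Fin.ext_iff,
    Fin.val_succ]
  split_ifs <;> simp_all

theorem bidiagLastRow_last (l : Fin m → R) (b : Fin (m + 1) → R) (j : Fin (m + 1)) :
    bidiagLastRow l b (Fin.last m) j = b j := by
  simp [bidiagLastRow]

def partialProds (l : Fin m → R) : Matrix (Fin (m + 1)) (Fin (m + 1)) R :=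
  Matrix.of fun j k =>
    if j ≤ k then ∏ i ∈ univ.filter (fun i : Fin m => (j : ℕ) ≤ i ∧ (i : ℕ) < k), l i else 0

theorem partialProds_self (l : Fin m → R) (k : Fin (m + 1)) : partialProds l k k = 1 := by
  simp only [partialProds, Matrix.of_apply, le_refl, if_true]
  exact prod_eq_one fun i hi => by simp only [mem_filter] at hi; omega

theorem det_partialProds (l : Fin m → R) : (partialProds l).det = 1 := by
  rw [Matrix.det_of_isUpperTriangular]
  · exact prod_eq_one fun k _ => partialProds_self l k
  · intro j k hkj
    simp [partialProds, not_le.mpr (show k < j from hkj)]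

theorem partialProds_castSucc (l : Fin m → R) (i : Fin m) (k : Fin (m + 1)) :
    partialProds l i.castSucc k = (1 : Matrix (Fin (m + 1)) (Fin (m + 1)) R) i.castSucc k
      + l i * partialProds l i.succ k := by
  rcases lt_trichotomy k i.castSucc with hk | rfl | hk
  · have : ¬ i.succ ≤ k := fun h => absurd (h.trans_lt hk) (not_lt.mpr i.castSucc_le_succ)
    simp [partialProds, not_le.mpr hk, hk.ne', this]
  · have : ¬ i.succ ≤ i.castSucc := not_le.mpr i.castSucc_lt_succ
    rw [partialProds_self]
    simp [partialProds, this]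
  · have hsplit : univ.filter (fun j : Fin m => (i.castSucc : ℕ) ≤ j ∧ (j : ℕ) < k) =
        insert i (univ.filter (fun j : Fin m => (i.succ : ℕ) ≤ j ∧ (j : ℕ) < k)) := by
      ext j
      simp only [mem_filter, mem_univ, true_and, mem_insert, Fin.lt_def, Fin.ext_iff,
        Fin.val_castSucc, Fin.val_succ] at hk ⊢
      omega
    have hi : i ∉ univ.filter (fun j : Fin m => (i.succ : ℕ) ≤ j ∧ (j : ℕ) < k) := by simp
    simp only [partialProds, Matrix.of_apply, Matrix.one_apply, if_pos hk.le, if_neg hk.ne,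
      if_pos (Fin.castSucc_lt_iff_succ_le.mp hk), hsplit, prod_insert hi, zero_add]

theorem partialProds_last (l : Fin m → R) (j : Fin (m + 1)) :
    partialProds l j (Fin.last m) = ∏ i ∈ univ.filter (fun i : Fin m => (j : ℕ) ≤ i), l i := by
  simp only [partialProds, Matrix.of_apply, if_pos (Fin.le_last j), Fin.val_last, Fin.is_lt,
    and_true]

theorem bidiagLastRow_mul_partialProds_castSucc (l : Fin m → R) (b : Fin (m + 1) → R)
    (i : Fin m) (k : Fin (m + 1)) :
    (bidiagLastRow l b * partialProds l) i.castSucc k =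
      (1 : Matrix (Fin (m + 1)) (Fin (m + 1)) R) i.castSucc k := by
  simp only [Matrix.mul_apply, bidiagLastRow_castSucc, add_mul, sum_add_distrib, ite_mul,
    one_mul, zero_mul, sum_ite_eq', mem_univ, if_true, partialProds_castSucc l i k]
  ring

theorem isLowerTriangular_bidiagLastRow_mul_partialProds (l : Fin m → R) (b : Fin (m + 1) → R) :
    (bidiagLastRow l b * partialProds l).IsLowerTriangular := by
  intro i k (hik : i < k)
  obtain ⟨i, rfl⟩ := Fin.exists_castSucc_eq.mpr (Fin.ne_last_of_lt hik)
  rw [bidiagLastRow_mul_partialProds_castSucc, Matrix.one_apply_ne hik.ne]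

theorem det_bidiagLastRow (l : Fin m → R) (b : Fin (m + 1) → R) :
    (bidiagLastRow l b).det =
      ∑ j, b j * ∏ i ∈ univ.filter (fun i : Fin m => (j : ℕ) ≤ i), l i := by
  have hdet := Matrix.det_mul (bidiagLastRow l b) (partialProds l)
  rw [det_partialProds, mul_one] at hdet
  rw [← hdet, Matrix.det_of_isLowerTriangular _
    (isLowerTriangular_bidiagLastRow_mul_partialProds l b), Fin.prod_univ_castSucc]
  simp only [bidiagLastRow_mul_partialProds_castSucc, Matrix.one_apply_eq, prod_const_one,
    one_mul]
  simp only [Matrix.mul_apply, bidiagLastRow_last, partialProds_last]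

end

theorem stmt0 (m : ℕ) (l : Fin m → ℝ) :
    (Matrix.of fun i j : Fin (m + 1) =>
        if h : (i : ℕ) < m then
          (if (j : ℕ) = (i : ℕ) then (1 : ℝ)
           else if (j : ℕ) = (i : ℕ) + 1 then -l ⟨i, h⟩ else 0)
        else esymmVal m l (m - (j : ℕ))).det
      = ∑ k ∈ Finset.range (m + 1), topProd m l k * esymmVal m l k := by
  change (bidiagLastRow l fun j : Fin (m + 1) => esymmVal m l (m - j)).det = _
  rw [det_bidiagLastRow, ← Fin.sum_univ_eq_sum_range (fun k => topProd m l k * esymmVal m l k),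
    ← Equiv.sum_comp Fin.revPerm]
  refine sum_congr rfl fun j _ => ?_
  have hrev : ((Fin.revPerm j : Fin (m + 1)) : ℕ) = m - j := by simp [Fin.val_rev]
  rw [hrev, topProd, Nat.sub_sub_self (Fin.is_le j), mul_comm]
end

section
/- If 0 < λ_1 ≤ λ_2 ≤ ... ≤ λ_m are real numbers, then for each k with 0 ≤ k ≤ m, the product λ_{m-k+1}λ_{m-k+2}⋯λ_m · E_k is at least E_k^{(2)}, where E_k is the k-th elementary symmetric function of λ_1,...,λ_m and E_k^{(2)} is the k-th elementary symmetric function of λ_1²,...,λ_m². -/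
open Finset

/-!
Compare the two sums term by term: `∏_{i ∈ s} λ_i² = (∏_{i ∈ s} λ_i) · ∏_{i ∈ s} λ_i`, and for a
`k`-subset `s` the first factor is at most the product of the `k` largest `λ_i`, because swapping
the indices of `s` outside the top `k` for the equally many missing top indices can only increase
each such factor.
-/

section

variable {ι R : Type*} [DecidableEq ι] [CommSemiring R] [LinearOrder R] [IsOrderedRing R]

theorem Finset.prod_sdiff_le_prod_sdiff_of_card_eq {f : ι → R} {s t : Finset ι}
    (hcard : #s = #t) (hf : ∀ i ∈ s \ t, 0 ≤ f i) (hst : ∀ i ∈ s \ t, ∀ j ∈ t \ s, f i ≤ f j) :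
    ∏ i ∈ s \ t, f i ≤ ∏ j ∈ t \ s, f j := by
  have hsdiff : #(s \ t) = #(t \ s) := card_sdiff_comm hcard
  obtain hempty | hne := (s \ t).eq_empty_or_nonempty
  · rw [hempty, card_empty, eq_comm, card_eq_zero] at hsdiff
    rw [hempty, hsdiff]
  obtain ⟨i₀, hi₀, hmax⟩ := (s \ t).exists_max_image f hne
  calc ∏ i ∈ s \ t, f i ≤ ∏ _i ∈ s \ t, f i₀ := prod_le_prod hf hmax
    _ = ∏ _j ∈ t \ s, f i₀ := by rw [prod_const, prod_const, hsdiff]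
    _ ≤ ∏ j ∈ t \ s, f j := prod_le_prod (fun _ _ => hf i₀ hi₀) (hst i₀ hi₀)

theorem Finset.prod_le_prod_of_card_eq {f : ι → R} {s t : Finset ι} (hcard : #s = #t)
    (hf : ∀ i ∈ s, 0 ≤ f i) (hst : ∀ i ∈ s \ t, ∀ j ∈ t \ s, f i ≤ f j) :
    ∏ i ∈ s, f i ≤ ∏ i ∈ t, f i := by
  rw [← prod_inter_mul_prod_sdiff s t, ← prod_inter_mul_prod_sdiff t s, inter_comm]
  exact mul_le_mul_of_nonneg_left
    (prod_sdiff_le_prod_sdiff_of_card_eq hcard (fun i hi => hf i (sdiff_subset hi)) hst)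
    (prod_nonneg fun i hi => hf i (inter_subset_right hi))

end

theorem Fin.card_filter_sub_le_val {m k : ℕ} (hk : k ≤ m) :
    #{i : Fin m | m - k ≤ (i : ℕ)} = k := by
  have h := card_filter_add_card_filter_not (s := univ) (fun i : Fin m => (i : ℕ) < m - k)
  simp only [not_lt, card_univ, Fintype.card_fin, Fin.card_filter_val_lt] at h
  omega

theorem prod_le_topProd {m k : ℕ} {l : Fin m → ℝ} (hl : ∀ i, 0 ≤ l i) (hmono : Monotone l)
    (hk : k ≤ m) {s : Finset (Fin m)} (hs : #s = k) : ∏ i ∈ s, l i ≤ topProd m l k := by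
  refine prod_le_prod_of_card_eq (hs.trans (Fin.card_filter_sub_le_val hk).symm)
    (fun i _ => hl i) fun i hi j hj => hmono ?_
  simp only [mem_sdiff, mem_filter, mem_univ, true_and] at hi hj
  exact Fin.le_def.mpr (by omega)

theorem stmt2 (m : ℕ) (l : Fin m → ℝ) (hl : ∀ i, 0 < l i) (hmono : Monotone l) :
    ∀ k ≤ m, esymmVal m (fun i => (l i) ^ 2) k ≤ topProd m l k * esymmVal m l k := by
  intro k hk
  rw [esymmVal, esymmVal, mul_sum]
  refine sum_le_sum fun s hs => ?_
  have hl₀ : ∀ i, 0 ≤ l i := fun i => (hl i).le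
  calc ∏ i ∈ s, l i ^ 2 = (∏ i ∈ s, l i) * ∏ i ∈ s, l i := by rw [prod_pow, sq]
    _ ≤ topProd m l k * ∏ i ∈ s, l i :=
      mul_le_mul_of_nonneg_right (prod_le_topProd hl₀ hmono hk (mem_powersetCard.mp hs).2)
        (prod_nonneg fun i _ => hl₀ i)
end

section
/- The m+1 polynomials y^{i-1}(1 - λ_i y) for 1 ≤ i ≤ m together with ∏_{i=1}^m (y + λ_i) are linearly independent over ℂ (equivalently over ℝ), provided all λ_i are positive reals. -/
open Polynomial

private def dseq (L e : ℕ → ℝ) : ℕ → ℝ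
  | 0 => -(e 0)
  | (k+1) => L k * dseq L e k - e (k+1)

private lemma coeff_aux (a : ℂ) (n k : ℕ) :
    (X ^ n * (1 - C a * X) : ℂ[X]).coeff k
      = (if k = n then 1 else 0) - (if k = n + 1 then a else 0) := by
  have h : (X ^ n * (1 - C a * X) : ℂ[X]) = X ^ n - C a * X ^ (n + 1) := by ring
  rw [h]
  simp [coeff_X_pow]

theorem stmt5 (m : ℕ) (l : Fin m → ℝ) (hl : ∀ i, 0 < l i) :
    LinearIndependent ℂ (fun i : Fin (m + 1) =>
      if h : (i : ℕ) < m then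
        X ^ (i : ℕ) * (1 - C ((l ⟨i, h⟩ : ℝ) : ℂ) * X)
      else ∏ j : Fin m, (X + C ((l j : ℝ) : ℂ))) := by
  rw [Fintype.linearIndependent_iff]
  intro g hg
  -- real coefficients of the product polynomial
  have hqmap : (∏ j : Fin m, (X + C ((l j : ℝ) : ℂ)))
      = (∏ j : Fin m, (X + C (l j)) : ℝ[X]).map (algebraMap ℝ ℂ) := by
    rw [Polynomial.map_prod]
    simp
  set e : ℕ → ℝ := fun k => (∏ j : Fin m, (X + C (l j)) : ℝ[X]).coeff k with he
  have hecast : ∀ k, (∏ j : Fin m, (X + C ((l j : ℝ) : ℂ))).coeff k = ((e k : ℝ) : ℂ) := by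
    intro k
    rw [hqmap, Polynomial.coeff_map]
    rfl
  have hepos : ∀ k ≤ m, 0 < e k := by
    intro k hk
    show 0 < (∏ j : Fin m, (X + C (l j)) : ℝ[X]).coeff k
    rw [Finset.prod_X_add_C_coeff _ _ (by simpa using hk : k ≤ (Finset.univ : Finset (Fin m)).card)]
    apply Finset.sum_pos
    · intro t _
      exact Finset.prod_pos (fun i _ => hl i)
    · exact Finset.powersetCard_nonempty_of_le (by simp)
  have hem : e m = 1 := by
    show (∏ j : Fin m, (X + C (l j)) : ℝ[X]).coeff m = 1
    have hmonic : (∏ j : Fin m, (X + C (l j)) : ℝ[X]).Monic :=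
      monic_prod_of_monic _ _ (fun i _ => monic_X_add_C _)
    have hdg : (∏ j : Fin m, (X + C (l j)) : ℝ[X]).natDegree = m := by
      rw [natDegree_prod_of_monic _ _ (fun i _ => monic_X_add_C _)]
      simp
    have := hmonic.coeff_natDegree
    rwa [hdg] at this
  -- extended sequences
  set L : ℕ → ℝ := fun k => if h : k < m then l ⟨k, h⟩ else 0 with hL
  set G : ℕ → ℂ := fun k => if h : k < m + 1 then g ⟨k, h⟩ else 0 with hG
  set d : ℕ → ℝ := dseq L e with hd
  have hdneg : ∀ k < m, d k < 0 := by
    intro k hk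
    induction k with
    | zero =>
      have := hepos 0 (Nat.zero_le m)
      have h0 : d 0 = -(e 0) := rfl
      rw [h0]
      linarith
    | succ n ih =>
      have hn : n < m := Nat.lt_of_succ_lt hk
      have h1 := ih hn
      have h2 := hepos (n + 1) (le_of_lt hk)
      have hLn : 0 < L n := by
        show (0:ℝ) < if h : n < m then l ⟨n, h⟩ else 0
        rw [dif_pos hn]; exact hl _
      have h3 : d (n + 1) = L n * d n - e (n + 1) := rfl
      rw [h3]
      nlinarith
  -- coefficient equations
  have hcoeff : ∀ k : ℕ, (∑ i : Fin (m + 1), g i *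
      (if h : (i : ℕ) < m then
        X ^ (i : ℕ) * (1 - C ((l ⟨i, h⟩ : ℝ) : ℂ) * X)
      else ∏ j : Fin m, (X + C ((l j : ℝ) : ℂ))).coeff k) = 0 := by
    intro k
    have h0 := congrArg (fun p : ℂ[X] => p.coeff k) hg
    simp only [coeff_zero] at h0
    rw [finset_sum_coeff] at h0
    simp only [coeff_smul, smul_eq_mul] at h0
    exact h0
  -- rewrite the coefficient equation explicitly
  have hkey : ∀ k : ℕ,
      (if h : k < m then G k else 0)
      - (if h : 1 ≤ k ∧ k ≤ m then (L (k-1) : ℂ) * G (k-1) else 0)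
      + G m * (e k : ℂ) = 0 := by
    intro k
    have h0 := hcoeff k
    rw [Fin.sum_univ_castSucc] at h0
    rw [show (if h : ((Fin.last m : Fin (m+1)) : ℕ) < m then
        X ^ ((Fin.last m : Fin (m+1)) : ℕ) * (1 - C ((l ⟨(Fin.last m : Fin (m+1)), h⟩ : ℝ) : ℂ) * X)
      else ∏ j : Fin m, (X + C ((l j : ℝ) : ℂ))) = ∏ j : Fin m, (X + C ((l j : ℝ) : ℂ)) from by
        rw [dif_neg]; simp] at h0
    rw [hecast k] at h0
    have hsum : ∀ i : Fin m,
        g i.castSucc * (if h : ((i.castSucc : Fin (m+1)) : ℕ) < m then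
          X ^ ((i.castSucc : Fin (m+1)) : ℕ) * (1 - C ((l ⟨((i.castSucc : Fin (m+1)) : ℕ), h⟩ : ℝ) : ℂ) * X)
        else ∏ j : Fin m, (X + C ((l j : ℝ) : ℂ))).coeff k
        = g i.castSucc * ((if k = (i : ℕ) then 1 else 0)
            - (if k = (i : ℕ) + 1 then ((l i : ℝ) : ℂ) else 0)) := by
      intro i
      have hc : (if h : ((i.castSucc : Fin (m+1)) : ℕ) < m then
          X ^ ((i.castSucc : Fin (m+1)) : ℕ) * (1 - C ((l ⟨((i.castSucc : Fin (m+1)) : ℕ), h⟩ : ℝ) : ℂ) * X)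
        else ∏ j : Fin m, (X + C ((l j : ℝ) : ℂ)))
          = X ^ (i : ℕ) * (1 - C ((l i : ℝ) : ℂ) * X) := by
        rw [dif_pos (by simpa using i.isLt)]
        rfl
      rw [hc, coeff_aux]
    simp only [hsum] at h0
    -- now split the sum
    have hsplit : (∑ i : Fin m, g i.castSucc * ((if k = (i : ℕ) then 1 else 0)
            - (if k = (i : ℕ) + 1 then ((l i : ℝ) : ℂ) else 0)))
        = (if h : k < m then G k else 0)
          - (if h : 1 ≤ k ∧ k ≤ m then (L (k-1) : ℂ) * G (k-1) else 0) := by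
      rw [show (∑ i : Fin m, g i.castSucc * ((if k = (i : ℕ) then 1 else 0)
            - (if k = (i : ℕ) + 1 then ((l i : ℝ) : ℂ) else 0)))
          = (∑ i : Fin m, (if k = (i : ℕ) then g i.castSucc else 0))
            - (∑ i : Fin m, (if k = (i : ℕ) + 1 then ((l i : ℝ) : ℂ) * g i.castSucc else 0)) from by
        rw [← Finset.sum_sub_distrib]
        apply Finset.sum_congr rfl
        intro i _
        split_ifs <;> ring]
      congr 1
      · by_cases h : k < m
        · rw [dif_pos h, Finset.sum_eq_single (⟨k, h⟩ : Fin m)]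
          · rw [if_pos rfl]
            show g _ = if h' : k < m + 1 then g ⟨k, h'⟩ else 0
            rw [dif_pos (Nat.lt_succ_of_lt h)]
            rfl
          · intro i _ hi
            rw [if_neg]
            intro hc
            exact hi (Fin.ext hc.symm)
          · simp
        · rw [dif_neg h]
          apply Finset.sum_eq_zero
          intro i _
          rw [if_neg]
          omega
      · by_cases h : 1 ≤ k ∧ k ≤ m
        · have hk1 : k - 1 < m := by omega
          rw [dif_pos h, Finset.sum_eq_single (⟨k-1, hk1⟩ : Fin m)]
          · rw [if_pos (by simp; omega)]
            show (l _ : ℂ) * g _ = ((if h' : k - 1 < m then l ⟨k-1, h'⟩ else 0 : ℝ) : ℂ)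
              * (if h' : k - 1 < m + 1 then g ⟨k-1, h'⟩ else 0)
            rw [dif_pos hk1, dif_pos (by omega : k - 1 < m + 1)]
            rfl
          · intro i _ hi
            rw [if_neg]
            intro hc
            exact hi (Fin.ext (show (i : ℕ) = k - 1 by omega))
          · simp
        · rw [dif_neg h]
          apply Finset.sum_eq_zero
          intro i _
          rw [if_neg]
          omega
    rw [hsplit] at h0
    have hGm : g (Fin.last m) = G m := by
      show g (Fin.last m) = if h : m < m + 1 then g ⟨m, h⟩ else 0
      rw [dif_pos (Nat.lt_succ_self m)]
      rfl
    rw [hGm] at h0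
    exact h0
  -- main induction : G k = G m * d k for k < m
  have hmain : ∀ k, k < m → G k = G m * (d k : ℂ) := by
    intro k
    induction k with
    | zero =>
      intro h0
      have hk := hkey 0
      rw [dif_pos h0, dif_neg (by omega)] at hk
      have hd0 : d 0 = -(e 0) := rfl
      rw [hd0]
      push_cast
      linear_combination hk
    | succ n ih =>
      intro hn1
      have hn : n < m := Nat.lt_of_succ_lt hn1
      have hk := hkey (n + 1)
      rw [dif_pos hn1, dif_pos (by omega)] at hk
      simp only [Nat.add_sub_cancel] at hk
      rw [ih hn] at hk
      have hdn : d (n + 1) = L n * d n - e (n + 1) := rfl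
      rw [hdn]
      push_cast
      linear_combination hk
  -- conclude G m = 0
  have hGm0 : G m = 0 := by
    rcases Nat.eq_zero_or_pos m with hm | hm
    · subst hm
      have hk := hkey 0
      rw [dif_neg (by omega), dif_neg (by omega)] at hk
      have he0 : e 0 = 1 := by rw [← hem]
      rw [he0] at hk
      simpa using hk
    · have hk := hkey m
      rw [dif_neg (by omega), dif_pos ⟨hm, le_refl m⟩, hem] at hk
      have hm1 : m - 1 < m := by omega
      rw [hmain (m-1) hm1] at hk
      have hdm : d (m-1) < 0 := hdneg _ hm1
      have hLm : 0 < L (m-1) := by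
        show (0:ℝ) < if h : m - 1 < m then l ⟨m-1, h⟩ else 0
        rw [dif_pos hm1]; exact hl _
      have hfac : (1 : ℂ) - (L (m-1) : ℂ) * (d (m-1) : ℂ) ≠ 0 := by
        have hr : (0:ℝ) < 1 - L (m-1) * d (m-1) := by nlinarith
        intro hc
        have h2 : ((1 - L (m-1) * d (m-1) : ℝ) : ℂ) = 0 := by push_cast; linear_combination hc
        rw [Complex.ofReal_eq_zero] at h2
        linarith
      have hfin : G m * (1 - (L (m-1) : ℂ) * (d (m-1) : ℂ)) = 0 := by
        push_cast at hk
        linear_combination hk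
      rcases mul_eq_zero.mp hfin with h | h
      · exact h
      · exact absurd h hfac
  -- conclude all g i = 0
  intro i
  rcases Nat.lt_or_ge (i : ℕ) m with h | h
  · have hmi := hmain (i : ℕ) h
    rw [hGm0, zero_mul] at hmi
    have hi : G (i : ℕ) = g i := by
      show (if h' : (i : ℕ) < m + 1 then g ⟨(i : ℕ), h'⟩ else 0) = g i
      rw [dif_pos i.isLt]
    rw [← hi, hmi]
  · have hi : (i : ℕ) = m := by omega
    have hgi : g i = G m := by
      show g i = if h' : m < m + 1 then g ⟨m, h'⟩ else 0
      rw [dif_pos (Nat.lt_succ_self m)]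
      congr 1
      exact Fin.ext hi
    rw [hgi, hGm0]
end

section
/- The m+2 polynomials y^{i-1}(1 - λ_i² y²) for 1 ≤ i ≤ m together with (y+1)∏_{i=1}^m (y + λ_i) and (y−1)∏_{i=1}^m (y − λ_i) are linearly independent over ℂ, provided all λ_i are positive reals. -/
open Polynomial

open scoped ComplexOrder

/-!
If `w (k + 2) = w k / λ_k²`, the functional `p ↦ ∑ₖ w k · [yᵏ] p` kills every `yᵏ (1 - λ_k² y²)`.
Starting from `(w 0, w 1) = (1, 0)` resp. `(0, 1)` gives an even functional `E` and an odd one `O`,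
both with nonnegative weights. Since `P = (y + 1) ∏ (y + λ_i)` has nonnegative coefficients and
positive coefficients of `1` and `y`, both `E P` and `O P` are positive (in the partial order of
`ℂ`). As `P(-y) = (-1)^(m+1) Q(y)` for `Q = (y - 1) ∏ (y - λ_i)`, `E` takes the values `±E P` on
`Q` and `O` the opposite sign, so `E P · O Q - E Q · O P = ±2 E P · O P ≠ 0`: no combination of
the first `m` polynomials, which are independent because their degrees `i + 2` are distinct,
reaches `P` or `Q`.
-/

theorem Fin.snoc_snoc_eq_dite {V : Type*} {n : ℕ} (v : Fin n → V) (x y : V) :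
    Fin.snoc (Fin.snoc v x : Fin (n + 1) → V) y = fun i : Fin (n + 2) =>
      if h : (i : ℕ) < n then v ⟨i, h⟩ else if (i : ℕ) = n then x else y := by
  funext i
  refine Fin.lastCases ?_ (fun i => Fin.lastCases ?_ (fun i => ?_) i) i <;> simp [Fin.snoc]

theorem LinearIndependent.finSnoc_finSnoc_of_det_ne_zero {K V : Type*} [Field K]
    [AddCommGroup V] [Module K V] {n : ℕ} {v : Fin n → V} (hv : LinearIndependent K v)
    {x y : V} (f g : V →ₗ[K] K) (hf : ∀ i, f (v i) = 0) (hg : ∀ i, g (v i) = 0)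
    (hdet : f x * g y - f y * g x ≠ 0) :
    LinearIndependent K (Fin.snoc (Fin.snoc v x : Fin (n + 1) → V) y) := by
  have vanish : ∀ h : V →ₗ[K] K, (∀ i, h (v i) = 0) →
      ∀ z ∈ Submodule.span K (Set.range v), h z = 0 := fun h hh z hz =>
    (Submodule.span_le (p := LinearMap.ker h)).mpr (Set.range_subset_iff.mpr hh) hz
  rw [linearIndependent_finSnoc, linearIndependent_finSnoc, Fin.range_snoc]
  refine ⟨⟨hv, fun hx => hdet ?_⟩, fun hy => hdet ?_⟩
  · simp [vanish f hf x hx, vanish g hg x hx]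
  · obtain ⟨a, z, hz, rfl⟩ := Submodule.mem_span_insert.mp hy
    simp only [map_add, map_smul, smul_eq_mul, vanish f hf z hz, vanish g hg z hz]
    ring

namespace Polynomial

variable {R : Type*}

theorem linearIndependent_of_degree_strictMono {K : Type*} [Field K] {n : ℕ}
    (p : Fin n → K[X]) (hp : StrictMono fun i => (p i).degree) (h0 : ∀ i, p i ≠ 0) :
    LinearIndependent K p := by
  induction n with
  | zero => exact linearIndependent_empty_type
  | succ n ih =>
    rw [← Fin.snoc_init_self p, linearIndependent_finSnoc]
    refine ⟨ih _ (hp.comp Fin.strictMono_castSucc) fun i => h0 _, fun hmem => ?_⟩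
    have hspan : Submodule.span K (Set.range (Fin.init p)) ≤
        degreeLT K (p (Fin.last n)).natDegree :=
      Submodule.span_le.mpr <| Set.range_subset_iff.mpr fun i => mem_degreeLT.mpr <| by
        rw [← degree_eq_natDegree (h0 _)]
        exact hp (Fin.castSucc_lt_last i)
    exact (mem_degreeLT.mp (hspan hmem)).ne (degree_eq_natDegree (h0 _))

lemma degree_X_pow_mul_one_sub_C_mul_X_sq {K : Type*} [Field K] {c : K} (hc : c ≠ 0) (k : ℕ) :
    (X ^ k * (1 - C c ^ 2 * X ^ 2)).degree = ↑(k + 2) := by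
  rw [degree_mul, degree_X_pow, ← C_pow, degree_sub_eq_right_of_degree_lt] <;>
    rw [degree_C_mul_X_pow 2 (pow_ne_zero 2 hc)]
  · rfl
  · simp

lemma linearIndependent_X_pow_mul_one_sub_C_mul_X_sq {K : Type*} [Field K] {n : ℕ}
    {c : Fin n → K} (hc : ∀ i, c i ≠ 0) :
    LinearIndependent K fun i : Fin n => X ^ (i : ℕ) * (1 - C (c i) ^ 2 * X ^ 2) := by
  refine linearIndependent_of_degree_strictMono _ (fun i j hij => ?_)
    fun i => ne_zero_of_coe_le_degree (degree_X_pow_mul_one_sub_C_mul_X_sq (hc i) i).ge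
  simp only [degree_X_pow_mul_one_sub_C_mul_X_sq (hc _)]
  exact WithBot.coe_lt_coe.mpr (by simpa using hij)

def twoStepProd [Mul R] (d : ℕ → R) (a b : R) : ℕ → R
  | 0 => a
  | 1 => b
  | k + 2 => twoStepProd d a b k * d k

section TwoStepProd

variable [CommRing R] (d : ℕ → R)

lemma neg_one_pow_mul_twoStepProd_left (a : R) (k : ℕ) :
    (-1) ^ k * twoStepProd d a 0 k = 1 * twoStepProd d a 0 k := by
  induction k using Nat.twoStepInduction with
  | zero => simp [twoStepProd]
  | one => simp [twoStepProd]
  | more k ih _ => simp only [twoStepProd, pow_add, neg_one_sq, mul_one, ← mul_assoc, ih]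

lemma neg_one_pow_mul_twoStepProd_right (b : R) (k : ℕ) :
    (-1) ^ k * twoStepProd d 0 b k = -1 * twoStepProd d 0 b k := by
  induction k using Nat.twoStepInduction with
  | zero => simp [twoStepProd]
  | one => simp [twoStepProd]
  | more k ih _ => simp only [twoStepProd, pow_add, neg_one_sq, mul_one, ← mul_assoc, ih]

end TwoStepProd

lemma twoStepProd_nonneg [Semiring R] [PartialOrder R] [IsOrderedRing R] {d : ℕ → R} {a b : R}
    (hd : ∀ k, 0 ≤ d k) (ha : 0 ≤ a) (hb : 0 ≤ b) (k : ℕ) : 0 ≤ twoStepProd d a b k := by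
  induction k using Nat.twoStepInduction with
  | zero => exact ha
  | one => exact hb
  | more k ih _ => exact mul_nonneg ih (hd k)

section NonnegCoeff

variable [CommSemiring R] [PartialOrder R]

lemma coeff_mul_nonneg [IsOrderedRing R] {p q : R[X]} (hp : ∀ k, 0 ≤ p.coeff k)
    (hq : ∀ k, 0 ≤ q.coeff k) (k : ℕ) : 0 ≤ (p * q).coeff k := by
  rw [coeff_mul]
  exact Finset.sum_nonneg fun x _ => mul_nonneg (hp x.1) (hq x.2)

lemma coeff_X_add_C_nonneg [IsOrderedRing R] {a : R} (ha : 0 ≤ a) (k : ℕ) :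
    0 ≤ (X + C a).coeff k := by
  rcases k with _ | _ | k <;> simp [coeff_X, coeff_C, ha]

lemma coeff_prod_X_add_C_nonneg [IsOrderedRing R] {ι : Type*} {s : Finset ι} {a : ι → R}
    (ha : ∀ j ∈ s, 0 ≤ a j) (k : ℕ) : 0 ≤ (∏ j ∈ s, (X + C (a j))).coeff k := by
  induction s using Finset.cons_induction generalizing k with
  | empty => rcases k with _ | k <;> simp [coeff_one]
  | cons j s hj ih =>
    rw [Finset.prod_cons]
    exact coeff_mul_nonneg (coeff_X_add_C_nonneg (ha j (by simp)))
      (ih fun i hi => ha i (by simp [hi])) k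

lemma coeff_zero_prod_X_add_C_pos [IsStrictOrderedRing R] {ι : Type*} {s : Finset ι}
    {a : ι → R} (ha : ∀ j ∈ s, 0 < a j) : 0 < (∏ j ∈ s, (X + C (a j))).coeff 0 := by
  rw [coeff_zero_eq_eval_zero, eval_prod]
  exact Finset.prod_pos fun j hj => by simpa using ha j hj

end NonnegCoeff

lemma X_add_one_mul_prod_comp_neg_X [CommRing R] {ι : Type*} (s : Finset ι) (a : ι → R) :
    ((X + 1) * ∏ j ∈ s, (X + C (a j))).comp (-X) =
      (-1 : R) ^ (s.card + 1) • ((X - 1) * ∏ j ∈ s, (X - C (a j))) := by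
  have h : ∀ c : R, (X + C c).comp (-X) = -(X - C c) := fun c => by simp; ring
  have h1 : (X + 1 : R[X]).comp (-X) = -(X - 1) := by simpa using h 1
  simp only [mul_comp, prod_comp, h, h1, Finset.prod_neg, smul_eq_C_mul, C_pow, C_neg, C_1]
  ring

section WeightedCoeffSum

variable [CommSemiring R]

def weightedCoeffSum (w : ℕ → R) : R[X] →ₗ[R] R :=
  lsum fun k => LinearMap.mulLeft R (w k)

variable (w : ℕ → R)

lemma weightedCoeffSum_apply (p : R[X]) :
    weightedCoeffSum w p = ∑ k ∈ p.support, w k * p.coeff k := rfl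

@[simp]
lemma weightedCoeffSum_monomial (n : ℕ) (a : R) :
    weightedCoeffSum w (monomial n a) = w n * a := by
  simp [weightedCoeffSum]

lemma weightedCoeffSum_pos [PartialOrder R] [IsStrictOrderedRing R] {w : ℕ → R} {p : R[X]}
    (hw : ∀ k, 0 ≤ w k) (hp : ∀ k, 0 ≤ p.coeff k) (k : ℕ) (hk : 0 < w k * p.coeff k) :
    0 < weightedCoeffSum w p := by
  rw [weightedCoeffSum_apply]
  refine Finset.sum_pos' (fun i _ => mul_nonneg (hw i) (hp i)) ⟨k, ?_, hk⟩
  exact mem_support_iff.mpr fun h => by simp [h] at hk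

end WeightedCoeffSum

lemma weightedCoeffSum_comp_neg_X [CommRing R] {w : ℕ → R} {ε : R}
    (hw : ∀ k, (-1) ^ k * w k = ε * w k) (p : R[X]) :
    weightedCoeffSum w (p.comp (-X)) = ε * weightedCoeffSum w p := by
  induction p using Polynomial.induction_on' with
  | add p q hp hq => simp [add_comp, hp, hq, mul_add]
  | monomial n a =>
    have h : (monomial n a).comp (-X) = monomial n ((-1) ^ n * a) := by
      rw [← C_mul_X_pow_eq_monomial, ← C_mul_X_pow_eq_monomial, C_mul_comp, X_pow_comp, neg_pow,
        C_mul, C_pow, C_neg, C_1]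
      ring
    rw [h, weightedCoeffSum_monomial, weightedCoeffSum_monomial, ← mul_assoc, mul_comm (w n), hw,
      mul_assoc]

lemma weightedCoeffSum_twoStepProd_X_pow_mul [CommRing R] {d : ℕ → R} {c : R} {k : ℕ}
    (h : c ^ 2 * d k = 1) (a b : R) :
    weightedCoeffSum (twoStepProd d a b) (X ^ k * (1 - C c ^ 2 * X ^ 2)) = 0 := by
  have hp : X ^ k * (1 - C c ^ 2 * X ^ 2) = monomial k 1 - monomial (k + 2) (c ^ 2) := by
    simp only [← C_mul_X_pow_eq_monomial, C_1, C_pow]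
    ring
  rw [hp, map_sub, weightedCoeffSum_monomial, weightedCoeffSum_monomial, twoStepProd]
  linear_combination -(twoStepProd d a b k) * h

lemma weightedCoeffSum_X_add_one_mul_prod_pos [CommSemiring R] [PartialOrder R]
    [IsStrictOrderedRing R] {ι : Type*} {s : Finset ι} {a : ι → R} (ha : ∀ j ∈ s, 0 < a j)
    {w : ℕ → R} (hw : ∀ k, 0 ≤ w k) (hw01 : 0 < w 0 ∨ 0 < w 1) :
    0 < weightedCoeffSum w ((X + 1) * ∏ j ∈ s, (X + C (a j))) := by
  have hR := coeff_prod_X_add_C_nonneg fun j hj => (ha j hj).le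
  have hR0 := coeff_zero_prod_X_add_C_pos ha
  have hX : ∀ k, 0 ≤ (X + C 1 : R[X]).coeff k := coeff_X_add_C_nonneg zero_le_one
  rw [C_1] at hX
  have hP := coeff_mul_nonneg hX hR
  rcases hw01 with hw0 | hw1
  · refine weightedCoeffSum_pos hw hP 0 (mul_pos hw0 ?_)
    simpa using hR0
  · refine weightedCoeffSum_pos hw hP 1 (mul_pos hw1 ?_)
    rw [add_mul, one_mul, coeff_add, coeff_X_mul]
    exact add_pos_of_pos_of_nonneg hR0 (hR 1)

lemma weightedCoeffSum_det_ne_zero {K : Type*} [Field K] [NeZero (2 : K)] {e o : ℕ → K}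
    (he : ∀ k, (-1) ^ k * e k = 1 * e k) (ho : ∀ k, (-1) ^ k * o k = -1 * o k) {p q : K[X]}
    {s : K} (hpq : p.comp (-X) = s • q) (hep : weightedCoeffSum e p ≠ 0)
    (hop : weightedCoeffSum o p ≠ 0) :
    weightedCoeffSum e p * weightedCoeffSum o q -
      weightedCoeffSum e q * weightedCoeffSum o p ≠ 0 := by
  have hepq := weightedCoeffSum_comp_neg_X he p
  have hopq := weightedCoeffSum_comp_neg_X ho p
  rw [hpq, map_smul, smul_eq_mul] at hepq hopq
  intro h
  refine mul_ne_zero two_ne_zero (mul_ne_zero hep hop) ?_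
  linear_combination (-s) * h - weightedCoeffSum o p * hepq + weightedCoeffSum e p * hopq

end Polynomial

noncomputable def invSqWeight {m : ℕ} (l : Fin m → ℝ) (k : ℕ) : ℂ :=
  if h : k < m then ((l ⟨k, h⟩ ^ 2)⁻¹ : ℝ) else 0

lemma invSqWeight_nonneg {m : ℕ} (l : Fin m → ℝ) (k : ℕ) : 0 ≤ invSqWeight l k := by
  unfold invSqWeight
  split_ifs
  exacts [Complex.zero_le_real.mpr (by positivity), le_rfl]

lemma sq_mul_invSqWeight {m : ℕ} {l : Fin m → ℝ} {i : Fin m} (hi : l i ≠ 0) :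
    ((l i : ℝ) : ℂ) ^ 2 * invSqWeight l i = 1 := by
  simp only [invSqWeight, i.isLt, dif_pos]
  push_cast
  field_simp [hi]

theorem stmt6 (m : ℕ) (l : Fin m → ℝ) (hl : ∀ i, 0 < l i) :
    LinearIndependent ℂ (fun i : Fin (m + 2) =>
      if h : (i : ℕ) < m then
        X ^ (i : ℕ) * (1 - C (((l ⟨i, h⟩ : ℝ) : ℂ)) ^ 2 * X ^ 2)
      else if (i : ℕ) = m then
        (X + 1) * ∏ j : Fin m, (X + C ((l j : ℝ) : ℂ))
      else
        (X - 1) * ∏ j : Fin m, (X - C ((l j : ℝ) : ℂ))) := by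
  rw [← Fin.snoc_snoc_eq_dite
    fun i : Fin m => X ^ (i : ℕ) * (1 - C (((l i : ℝ) : ℂ)) ^ 2 * X ^ 2)]
  have hpos : ∀ j ∈ Finset.univ, 0 < ((l j : ℝ) : ℂ) :=
    fun j _ => Complex.zero_lt_real.mpr (hl j)
  have hw : ∀ a b, 0 ≤ a → 0 ≤ b → ∀ k, 0 ≤ twoStepProd (invSqWeight l) a b k :=
    fun _ _ => twoStepProd_nonneg (invSqWeight_nonneg l)
  have hvanish : ∀ a b (i : Fin m), weightedCoeffSum (twoStepProd (invSqWeight l) a b)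
      (X ^ (i : ℕ) * (1 - C (((l i : ℝ) : ℂ)) ^ 2 * X ^ 2)) = 0 :=
    fun a b i => weightedCoeffSum_twoStepProd_X_pow_mul (sq_mul_invSqWeight (hl i).ne') a b
  refine LinearIndependent.finSnoc_finSnoc_of_det_ne_zero
    (linearIndependent_X_pow_mul_one_sub_C_mul_X_sq fun i => by simpa using (hl i).ne')
    _ _ (hvanish 1 0) (hvanish 0 1) ?_
  refine weightedCoeffSum_det_ne_zero (s := (-1) ^ (m + 1))
    (neg_one_pow_mul_twoStepProd_left _ 1) (neg_one_pow_mul_twoStepProd_right _ 1) ?_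
    (weightedCoeffSum_X_add_one_mul_prod_pos hpos (hw 1 0 zero_le_one le_rfl)
      (Or.inl (by simp [twoStepProd]))).ne'
    (weightedCoeffSum_X_add_one_mul_prod_pos hpos (hw 0 1 le_rfl zero_le_one)
      (Or.inr (by simp [twoStepProd]))).ne'
  rw [X_add_one_mul_prod_comp_neg_X, Finset.card_univ, Fintype.card_fin]
end

section
/- Let Ẽ_k denote the k-th elementary symmetric function of 1, λ_1, ..., λ_m. The determinant of the (m+2)×(m+2) matrix whose first m rows are (row i has 1 in column i and −λ_i² in column i+2, zeros elsewhere), whose (m+1)-th row is (Ẽ_{m+1}, Ẽ_m, ..., Ẽ_1, 1), and whose (m+2)-th row is ((−1)^{m+1}Ẽ_{m+1}, (−1)^m Ẽ_m, ..., −Ẽ_1, 1), equals 2pq, where p = 1 + λ_m² Ẽ_2 + λ_{m−2}²λ_m² Ẽ_4 + ⋯ and q = Ẽ_1 + λ_{m−1}² Ẽ_3 + λ_{m−3}²λ_{m−1}² Ẽ_5 + ⋯. -/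
open Finset

/-- The `k`-th elementary symmetric function of the `m+1` numbers `1, l 0, ..., l (m-1)`. -/
def esymmTilde (m : ℕ) (l : Fin m → ℝ) (k : ℕ) : ℝ :=
  ∑ s ∈ Finset.powersetCard k (Finset.univ : Finset (Fin (m + 1))),
    ∏ i ∈ s, (Fin.cons 1 l : Fin (m + 1) → ℝ) i

/-- `l` read at a natural-number index (junk value `0` out of range; never used below). -/
def lget (m : ℕ) (l : Fin m → ℝ) (n : ℕ) : ℝ :=
  if h : n < m then l ⟨n, h⟩ else 0

/-- Coefficient `λ_{m-2j+2}² λ_{m-2j+4}² ⋯ λ_m²` of `Ẽ_{2j}` in `p` (1-indexed λ's). -/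
def coefP (m : ℕ) (l : Fin m → ℝ) (j : ℕ) : ℝ :=
  ∏ t ∈ Finset.range j, (lget m l (m - 1 - 2 * t)) ^ 2

/-- Coefficient `λ_{m-2j}² λ_{m-2j+2}² ⋯ λ_{m-1}²` of `Ẽ_{2j+1}` in `q` (1-indexed λ's). -/
def coefQ (m : ℕ) (l : Fin m → ℝ) (j : ℕ) : ℝ :=
  ∏ t ∈ Finset.range j, (lget m l (m - 2 - 2 * t)) ^ 2

/-- `p = 1 + λ_m² Ẽ_2 + λ_{m-2}² λ_m² Ẽ_4 + ⋯`. -/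
def pB (m : ℕ) (l : Fin m → ℝ) : ℝ :=
  ∑ j ∈ Finset.range ((m + 3) / 2), coefP m l j * esymmTilde m l (2 * j)

/-- `q = Ẽ_1 + λ_{m-1}² Ẽ_3 + λ_{m-3}² λ_{m-1}² Ẽ_5 + ⋯`. -/
def qB (m : ℕ) (l : Fin m → ℝ) : ℝ :=
  ∑ j ∈ Finset.range ((m + 2) / 2), coefQ m l j * esymmTilde m l (2 * j + 1)

/-!
Right-multiplying by the unitriangular matrix `T = (1 - ∑ c_i E_{i,i+2})⁻¹`, whose entries are
`T j k = c_j c_{j+2} ⋯ c_{k-2}` for even `k - j ≥ 0`, turns the first `m` rows into unit rows, so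
the determinant is the bottom-right `2 × 2` minor of the product. With `c_i = λ_i²`, its columns
`m` and `m + 1` are `(q, -q)` and `(p, p)`: the sign `(-1)^(m+1-j)` is constant along each parity
class of columns.
-/

section TwoStep

variable {R : Type*} [CommRing R]

def chainCoeff (c : ℕ → R) (j k : ℕ) : R :=
  if j ≤ k ∧ 2 ∣ k - j then ∏ s ∈ range ((k - j) / 2), c (k - 2 - 2 * s) else 0

def chainSum (c f : ℕ → R) (k : ℕ) : R :=
  ∑ t ∈ range (k / 2 + 1), (∏ s ∈ range t, c (k - 2 - 2 * s)) * f (k - 2 * t)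

def twoStepMatrix (m : ℕ) (c u v : ℕ → R) : Matrix (Fin (m + 2)) (Fin (m + 2)) R :=
  Matrix.of fun i j =>
    if (i : ℕ) < m then
      (if (j : ℕ) = i then 1 else if (j : ℕ) = i + 2 then -c i else 0)
    else if (i : ℕ) = m then u j
    else v j

def chainMatrix (n : ℕ) (c : ℕ → R) : Matrix (Fin n) (Fin n) R :=
  Matrix.of fun j k => chainCoeff c j k

@[simp]
lemma chainCoeff_self (c : ℕ → R) (k : ℕ) : chainCoeff c k k = 1 := by
  simp [chainCoeff]

lemma chainCoeff_of_lt (c : ℕ → R) {j k : ℕ} (h : k < j) : chainCoeff c j k = 0 :=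
  if_neg fun hc => by omega

lemma chainCoeff_sub_mul_chainCoeff (c : ℕ → R) (i k : ℕ) :
    chainCoeff c i k - c i * chainCoeff c (i + 2) k = if i = k then 1 else 0 := by
  rcases eq_or_ne i k with rfl | hk
  · simp [chainCoeff_of_lt c (Nat.lt_add_of_pos_right two_pos)]
  rw [if_neg hk]
  by_cases h : i + 2 ≤ k ∧ 2 ∣ k - i
  · rw [chainCoeff, if_pos ⟨by omega, h.2⟩, chainCoeff, if_pos ⟨h.1, by omega⟩,
      show (k - i) / 2 = (k - (i + 2)) / 2 + 1 by omega, prod_range_succ,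
      show k - 2 - 2 * ((k - (i + 2)) / 2) = i by omega]
    ring
  · rw [chainCoeff, if_neg, chainCoeff, if_neg, mul_zero, sub_zero] <;>
      exact fun hc => h ⟨by omega, by omega⟩

lemma sum_mul_chainCoeff (c f : ℕ → R) {N k : ℕ} (hk : k < N) :
    ∑ n ∈ range N, f n * chainCoeff c n k = chainSum c f k := by
  have himage : (range (k / 2 + 1)).image (fun t => k - 2 * t) ⊆ range N := by
    intro n hn
    simp only [mem_image, mem_range] at hn ⊢
    omega
  have hzero : ∀ n ∈ range N, n ∉ (range (k / 2 + 1)).image (fun t => k - 2 * t) →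
      f n * chainCoeff c n k = 0 := by
    intro n _ hn
    rw [chainCoeff, if_neg, mul_zero]
    intro hc
    exact hn (mem_image.mpr ⟨(k - n) / 2, mem_range.mpr (by omega), by omega⟩)
  rw [← sum_subset himage hzero, sum_image fun x hx y hy hxy => by
    simp only [coe_range, Set.mem_Iio] at hx hy hxy; omega]
  refine sum_congr rfl fun t ht => ?_
  rw [mem_range] at ht
  rw [chainCoeff, if_pos ⟨by omega, by omega⟩, mul_comm,
    show (k - (k - 2 * t)) / 2 = t by omega]

lemma chainSum_neg_one_pow_mul (c f : ℕ → R) {N k : ℕ} (hk : k ≤ N) :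
    chainSum c (fun j => (-1) ^ (N - j) * f j) k = (-1) ^ (N - k) * chainSum c f k := by
  rw [chainSum, chainSum, mul_sum]
  refine sum_congr rfl fun t ht => ?_
  rw [mem_range] at ht
  rw [show N - (k - 2 * t) = N - k + 2 * t by omega, pow_add, pow_mul, neg_one_sq, one_pow]
  ring

lemma twoStepMatrix_mul_chainMatrix_of_lt (m : ℕ) (c u v : ℕ → R) (i k : Fin (m + 2))
    (hi : (i : ℕ) < m) :
    (twoStepMatrix m c u v * chainMatrix (m + 2) c) i k =
      if (i : ℕ) = k then 1 else 0 := by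
  have hrow : ∀ j : Fin (m + 2), twoStepMatrix m c u v i j =
      if (j : ℕ) = i then 1 else if (j : ℕ) = i + 2 then -c i else 0 := fun j => if_pos hi
  let i₂ : Fin (m + 2) := ⟨i + 2, by omega⟩
  rw [Matrix.mul_apply, sum_eq_add_of_mem i i₂ (mem_univ _) (mem_univ _)
    (Fin.ne_of_val_ne (by simp [i₂])), ← chainCoeff_sub_mul_chainCoeff c]
  · simp [hrow, i₂, chainMatrix, sub_eq_add_neg]
  · intro j _ hj
    rw [hrow, if_neg (Fin.val_ne_of_ne hj.1), if_neg fun h => hj.2 (Fin.ext h),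
      zero_mul]

lemma det_chainMatrix (n : ℕ) (c : ℕ → R) : (chainMatrix n c).det = 1 := by
  have hupper : (chainMatrix n c).IsUpperTriangular := fun _ _ hlt => chainCoeff_of_lt c hlt
  rw [Matrix.det_of_isUpperTriangular hupper]
  simp [chainMatrix]

lemma mul_chainMatrix_apply_of_row {n : ℕ} (A : Matrix (Fin n) (Fin n) R) (c f : ℕ → R)
    {i : Fin n} (hrow : ∀ j, A i j = f j) (k : Fin n) :
    (A * chainMatrix n c) i k = chainSum c f k := by
  simp only [Matrix.mul_apply, hrow, chainMatrix, Matrix.of_apply]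
  rw [Fin.sum_univ_eq_sum_range (fun j => f j * chainCoeff c j k), sum_mul_chainCoeff c f k.isLt]

theorem det_twoStepMatrix (m : ℕ) (c u v : ℕ → R) :
    (twoStepMatrix m c u v).det =
      chainSum c u m * chainSum c v (m + 1) - chainSum c u (m + 1) * chainSum c v m := by
  set B := twoStepMatrix m c u v * chainMatrix (m + 2) c
  have hu : ∀ k, B (Fin.natAdd m 0) k = chainSum c u k :=
    mul_chainMatrix_apply_of_row _ c u fun j => by simp [twoStepMatrix]
  have hv : ∀ k, B (Fin.natAdd m 1) k = chainSum c v k :=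
    mul_chainMatrix_apply_of_row _ c v fun j => by simp [twoStepMatrix]
  have hblocks : B.submatrix finSumFinEquiv finSumFinEquiv =
      Matrix.fromBlocks 1 0 (B.submatrix (Fin.natAdd m) (Fin.castAdd 2))
        (B.submatrix (Fin.natAdd m) (Fin.natAdd m)) := by
    ext (a | a) (b | b)
    · simp [B, twoStepMatrix_mul_chainMatrix_of_lt, Matrix.one_apply, Fin.ext_iff]
    · simp [B, twoStepMatrix_mul_chainMatrix_of_lt]
      omega
    · rfl
    · rfl
  rw [← mul_one (twoStepMatrix m c u v).det, ← det_chainMatrix (m + 2) c, ← Matrix.det_mul,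
    ← Matrix.det_submatrix_equiv_self finSumFinEquiv, hblocks, Matrix.det_fromBlocks_zero₁₂,
    Matrix.det_one, one_mul, Matrix.det_fin_two]
  simp [hu, hv]

end TwoStep

lemma chainSum_esymmTilde_self (m : ℕ) (l : Fin m → ℝ) :
    chainSum (fun n => lget m l n ^ 2) (fun j => esymmTilde m l (m + 1 - j)) m = qB m l := by
  rw [chainSum, qB, show m / 2 + 1 = (m + 2) / 2 by omega]
  refine sum_congr rfl fun t ht => ?_
  rw [mem_range] at ht
  rw [coefQ, show m + 1 - (m - 2 * t) = 2 * t + 1 by omega]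

lemma chainSum_esymmTilde_succ (m : ℕ) (l : Fin m → ℝ) :
    chainSum (fun n => lget m l n ^ 2) (fun j => esymmTilde m l (m + 1 - j)) (m + 1) =
      pB m l := by
  rw [chainSum, pB, show (m + 1) / 2 + 1 = (m + 3) / 2 by omega]
  refine sum_congr rfl fun t ht => ?_
  rw [mem_range] at ht
  rw [coefP, show m + 1 - (m + 1 - 2 * t) = 2 * t by omega, show m + 1 - 2 = m - 1 by omega]

theorem stmt7 (m : ℕ) (l : Fin m → ℝ) :
    (Matrix.of fun i j : Fin (m + 2) =>
        if h : (i : ℕ) < m then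
          (if (j : ℕ) = (i : ℕ) then (1 : ℝ)
           else if (j : ℕ) = (i : ℕ) + 2 then -(l ⟨i, h⟩) ^ 2 else 0)
        else if (i : ℕ) = m then esymmTilde m l (m + 1 - (j : ℕ))
        else (-1) ^ (m + 1 - (j : ℕ)) * esymmTilde m l (m + 1 - (j : ℕ))).det
      = 2 * pB m l * qB m l := by
  have key := det_twoStepMatrix m (fun n => lget m l n ^ 2)
    (fun j => esymmTilde m l (m + 1 - j)) (fun j => (-1) ^ (m + 1 - j) * esymmTilde m l (m + 1 - j))
  rw [chainSum_neg_one_pow_mul _ _ (Nat.le_add_right m 1), chainSum_neg_one_pow_mul _ _ le_rfl,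
    chainSum_esymmTilde_self, chainSum_esymmTilde_succ, Nat.add_sub_cancel_left, Nat.sub_self,
    pow_one, pow_zero, one_mul, neg_one_mul] at key
  convert key using 2
  · ext i j
    by_cases hi : (i : ℕ) < m <;> simp [twoStepMatrix, lget, hi]
  · ring
end

section
/- For every real λ > 0 and every positive integer m, the inequality [(1+λ²)^m + ∑_{k≥0} C(m,2k+1)(λ^{4k+3} − λ^{4k+2})] · [(1+λ²)^m − ∑_{k≥0} C(m,2k+1)(λ^{4k+2} − λ^{4k+1})] ≥ (1+λ²)^{2m} holds. -/
lemma stmt10_key (m : ℕ) (x : ℝ) (hx : 0 ≤ x) :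
    ∑ k ∈ Finset.range m, (m.choose (2 * k + 1) : ℝ) * x ^ (2 * k + 1) ≤ (1 + x) ^ m := by
  have h1 : (1 + x) ^ m = ∑ j ∈ Finset.range (m + 1), (m.choose j : ℝ) * x ^ j := by
    rw [add_comm, add_pow]
    simp [mul_comm]
  have h2 : ∑ j ∈ Finset.range (m + 1), (m.choose j : ℝ) * x ^ j
      = ∑ j ∈ Finset.range (2 * m + 1), (m.choose j : ℝ) * x ^ j := by
    apply Finset.sum_subset (Finset.range_subset_range.2 (by omega))
    intro j hj hj2
    simp only [Finset.mem_range] at hj hj2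
    rw [Nat.choose_eq_zero_of_lt (by omega)]
    simp
  have h3 : ∑ k ∈ Finset.range m, (m.choose (2 * k + 1) : ℝ) * x ^ (2 * k + 1)
      = ∑ j ∈ (Finset.range m).image (fun k => 2 * k + 1), (m.choose j : ℝ) * x ^ j := by
    rw [Finset.sum_image]
    intro a _ b _ h
    simp only at h
    omega
  rw [h1, h2, h3]
  apply Finset.sum_le_sum_of_subset_of_nonneg
  · intro j hj
    simp only [Finset.mem_image, Finset.mem_range] at hj ⊢
    obtain ⟨k, hk, rfl⟩ := hj
    omega
  · intro j _ _
    positivity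

theorem stmt10 (m : ℕ) (hm : 0 < m) (l : ℝ) (hl : 0 < l) :
    (1 + l ^ 2) ^ (2 * m) ≤
      ((1 + l ^ 2) ^ m +
          ∑ k ∈ Finset.range m, (m.choose (2 * k + 1) : ℝ) * (l ^ (4 * k + 3) - l ^ (4 * k + 2))) *
        ((1 + l ^ 2) ^ m -
          ∑ k ∈ Finset.range m, (m.choose (2 * k + 1) : ℝ) * (l ^ (4 * k + 2) - l ^ (4 * k + 1))) := by
  set T : ℝ := ∑ k ∈ Finset.range m, (m.choose (2 * k + 1) : ℝ) * l ^ (4 * k + 1) with hTdef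
  have hT : 0 ≤ T := by
    apply Finset.sum_nonneg
    intro k _
    positivity
  have hkey : l * T ≤ (1 + l ^ 2) ^ m := by
    have := stmt10_key m (l ^ 2) (by positivity)
    calc l * T = ∑ k ∈ Finset.range m, (m.choose (2 * k + 1) : ℝ) * (l ^ 2) ^ (2 * k + 1) := by
          rw [Finset.mul_sum]
          apply Finset.sum_congr rfl
          intro k _
          ring
      _ ≤ (1 + l ^ 2) ^ m := this
  have hS1 : ∑ k ∈ Finset.range m, (m.choose (2 * k + 1) : ℝ) * (l ^ (4 * k + 3) - l ^ (4 * k + 2))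
      = (l - 1) * (l * T) := by
    rw [hTdef, Finset.mul_sum, Finset.mul_sum]
    apply Finset.sum_congr rfl
    intro k _
    ring
  have hS2 : ∑ k ∈ Finset.range m, (m.choose (2 * k + 1) : ℝ) * (l ^ (4 * k + 2) - l ^ (4 * k + 1))
      = (l - 1) * T := by
    rw [hTdef, Finset.mul_sum]
    apply Finset.sum_congr rfl
    intro k _
    ring
  rw [hS1, hS2, pow_mul']
  nlinarith [mul_nonneg (mul_nonneg (sq_nonneg (l - 1)) hT) (sub_nonneg.2 hkey)]
end

section
/- For any positive integer m and real λ > 0, with A = (1+λ²)^m and B = (1−λ²)^m, one has (A + (λ−1)(A−B)/2)·(A − (λ−1)(A−B)/(2λ)) ≥ A². -/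
theorem stmt18 (m : ℕ) (hm : 0 < m) (l : ℝ) (hl : 0 < l) :
    ((1 + l ^ 2) ^ m + (l - 1) * ((1 + l ^ 2) ^ m - (1 - l ^ 2) ^ m) / 2) *
        ((1 + l ^ 2) ^ m - (l - 1) * ((1 + l ^ 2) ^ m - (1 - l ^ 2) ^ m) / (2 * l))
      ≥ ((1 + l ^ 2) ^ m) ^ 2 := by
  set A := (1 + l ^ 2) ^ m with hA
  set B := (1 - l ^ 2) ^ m with hB
  have habs : |B| ≤ A := by
    rw [hB, hA, abs_pow]
    exact pow_le_pow_left₀ (abs_nonneg _) (by rw [abs_le]; constructor <;> nlinarith) m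
  have h1 : B ≤ A := le_of_abs_le habs
  have h2 : -A ≤ B := neg_le_of_abs_le habs
  have key : (A + (l - 1) * (A - B) / 2) * (A - (l - 1) * (A - B) / (2 * l)) - A ^ 2
      = (A - B) * (l - 1) ^ 2 / (2 * l) * (A - (A - B) / 2) := by
    field_simp
    ring
  have hpos : 0 ≤ (A - B) * (l - 1) ^ 2 / (2 * l) * (A - (A - B) / 2) :=
    mul_nonneg (div_nonneg (mul_nonneg (by linarith) (sq_nonneg _)) (by linarith)) (by linarith)
  linarith [key, hpos]
end

section
/- Let m ≥ 1, λ_1,...,λ_m positive reals, and consider the m+1 dehomogenized polynomials f_i(y) = y^{i-1}(1 − λ_i y), 1 ≤ i ≤ m, and g(y) = ∏_{i=1}^m (y + λ_i), all of degree ≤ m. The determinant of their coefficient matrix (in the monomial basis 1, y, ..., y^m) is, up to sign, 1 + ∑_{k=1}^m (λ_{m-k+1}⋯λ_m) E_k, hence nonzero; consequently f_1,...,f_m, g form a basis of the space of polynomials of degree ≤ m. -/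
open Finset Polynomial

/-- The family `f_1, …, f_m, g` of dehomogenized polynomials:
`f_i = y^{i-1} (1 - λ_i y)` and `g = ∏ (y + λ_i)`. -/
noncomputable def fam (m : ℕ) (l : Fin m → ℝ) : Fin (m + 1) → Polynomial ℝ :=
  fun i =>
    if h : (i : ℕ) < m then X ^ (i : ℕ) * (1 - C (l ⟨i, h⟩) * X)
    else ∏ j : Fin m, (X + C (l j))

/-!
Weight the monomial `y^j` by `w_j = λ_{j+1} ⋯ λ_m`, so that `w_m = 1`. Since `w_{i-1} = λ_i w_i`,
every `f_i` pairs with `w` to zero, while `g`, whose coefficient of `y^j` is `E_{m-j}`, pairs with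
it to `∑_k (λ_{m-k+1} ⋯ λ_m) E_k`. So the coefficient matrix `A` sends `w` to that value times the
last basis vector, and multiplying by the adjugate shows that `det A` is this value times the last
diagonal cofactor, which is `1` because that minor is upper unitriangular. The value is positive,
so the `m + 1` polynomials are independent, hence a basis of the `(m + 1)`-dimensional space of
polynomials of degree at most `m`.
-/

namespace Matrix

variable {R n : Type*} [CommRing R] [Fintype n] [DecidableEq n]

theorem det_eq_mul_adjugate_of_mulVec_eq_single (A : Matrix n n R) {w : n → R} {k : n}
    {s : R} (hw : w k = 1) (hA : A *ᵥ w = Pi.single k s) :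
    A.det = s * A.adjugate k k := by
  calc A.det = ((A.adjugate * A) *ᵥ w) k := by simp [adjugate_mul, smul_mulVec, hw]
    _ = s * A.adjugate k k := by simp [← mulVec_mulVec, hA, mulVec_single, mul_comm]

end Matrix

namespace Polynomial

def coeffMatrix {R : Type*} [Semiring R] {n : ℕ} (v : Fin n → R[X]) :
    Matrix (Fin n) (Fin n) R :=
  Matrix.of fun i j => (v i).coeff j

theorem sum_coeff_X_pow_mul {R : Type*} [Semiring R] {n k : ℕ} (hk : k < n) (w : ℕ → R) :
    ∑ j : Fin n, (X ^ k : R[X]).coeff j * w j = w k := by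
  rw [Fin.sum_univ_eq_sum_range (fun j => (X ^ k : R[X]).coeff j * w j)]
  simp [coeff_X_pow, hk]

variable {K : Type*} [Field K]

theorem linearIndependent_of_det_coeffMatrix_ne_zero {n : ℕ} {v : Fin n → K[X]}
    (h : (coeffMatrix v).det ≠ 0) : LinearIndependent K v := by
  have hrows : LinearIndependent K (coeffMatrix v) :=
    Matrix.linearIndependent_rows_iff_isUnit.mpr ((Matrix.isUnit_iff_isUnit_det _).mpr h.isUnit)
  exact .of_comp (LinearMap.pi fun j : Fin n => lcoeff K j) hrows

theorem finrank_degreeLE (n : ℕ) : Module.finrank K (degreeLE K n) = n + 1 := by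
  rw [← degreeLT_succ_eq_degreeLE, (degreeLTEquiv K (n + 1)).finrank_eq, Module.finrank_fin_fun]

theorem span_eq_degreeLE_of_linearIndependent {n : ℕ} {v : Fin (n + 1) → K[X]}
    (hv : LinearIndependent K v) (hdeg : ∀ i, v i ∈ degreeLE K n) :
    Submodule.span K (Set.range v) = degreeLE K n := by
  have : FiniteDimensional K (degreeLE K n) := .of_finrank_pos (by rw [finrank_degreeLE]; omega)
  refine Submodule.eq_of_le_of_finrank_eq
    (Submodule.span_le.mpr (Set.range_subset_iff.mpr hdeg)) ?_
  rw [finrank_span_eq_card hv, finrank_degreeLE, Fintype.card_fin]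

end Polynomial

open Matrix

section

variable (m : ℕ) (l : Fin m → ℝ)

theorem fam_castSucc (i : Fin m) :
    fam m l i.castSucc = X ^ (i : ℕ) - C (l i) * X ^ ((i : ℕ) + 1) := by
  simp only [fam, Fin.val_castSucc, i.isLt, dite_true]
  ring

theorem fam_last : fam m l (Fin.last m) = ∏ j, (X + C (l j)) := by
  simp [fam]

theorem fam_mem_degreeLE (i : Fin (m + 1)) : fam m l i ∈ degreeLE ℝ m := by
  refine mem_degreeLE.mpr (degree_le_of_natDegree_le ?_)
  induction i using Fin.lastCases with
  | last =>
    rw [fam_last]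
    refine (natDegree_prod_le _ _).trans ?_
    simp
  | cast i =>
    rw [fam_castSucc]
    compute_degree
    exact i.isLt

theorem topProd_zero : topProd m l 0 = 1 :=
  prod_eq_one fun i hi => absurd (mem_filter.mp hi).2 (by omega)

theorem esymmVal_zero : esymmVal m l 0 = 1 := by
  simp [esymmVal]

theorem topProd_sub_val_eq_mul (i : Fin m) :
    topProd m l (m - i) = l i * topProd m l (m - (i + 1)) := by
  have hfilter : univ.filter (fun j : Fin m => m - (m - i) ≤ (j : ℕ))
      = insert i (univ.filter fun j : Fin m => m - (m - (i + 1)) ≤ (j : ℕ)) := by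
    ext j
    simp [Fin.ext_iff]
    omega
  rw [topProd, topProd, hfilter, prod_insert (by simp; omega)]

theorem coeff_prod_X_add_C_eq_esymmVal {j : ℕ} (hj : j ≤ m) :
    (∏ i, (X + C (l i))).coeff j = esymmVal m l (m - j) := by
  rw [prod_X_add_C_coeff univ l (by simpa using hj), card_univ, Fintype.card_fin, esymmVal]

theorem coeffMatrix_fam_mulVec_topProd :
    coeffMatrix (fam m l) *ᵥ (fun j => topProd m l (m - j))
      = Pi.single (Fin.last m) (∑ k ∈ range (m + 1), topProd m l k * esymmVal m l k) := by
  ext i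
  induction i using Fin.lastCases with
  | last =>
    simp only [mulVec, dotProduct, coeffMatrix, of_apply, fam_last, Pi.single_eq_same]
    rw [← sum_range_reflect, Nat.add_sub_cancel,
      ← Fin.sum_univ_eq_sum_range (fun j => topProd m l (m - j) * esymmVal m l (m - j))]
    refine sum_congr rfl fun j _ => ?_
    rw [coeff_prod_X_add_C_eq_esymmVal m l (Nat.lt_succ_iff.mp j.isLt), mul_comm]
  | cast i =>
    rw [Pi.single_eq_of_ne (Fin.castSucc_lt_last i).ne]
    simp only [mulVec, dotProduct, coeffMatrix, of_apply, fam_castSucc, coeff_sub, coeff_C_mul,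
      sub_mul, mul_assoc, sum_sub_distrib, ← mul_sum]
    rw [sum_coeff_X_pow_mul (by omega) (fun j => topProd m l (m - j)),
      sum_coeff_X_pow_mul (by omega) (fun j => topProd m l (m - j)), topProd_sub_val_eq_mul,
      sub_self]

theorem adjugate_coeffMatrix_fam_last :
    (coeffMatrix (fam m l)).adjugate (Fin.last m) (Fin.last m) = 1 := by
  rw [adjugate_apply, det_of_isUpperTriangular]
  · refine prod_eq_one fun i _ => ?_
    induction i using Fin.lastCases with
    | last => simp
    | cast i => simp [coeffMatrix, fam_castSucc, coeff_X_pow]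
  · intro i j (hji : j < i)
    induction i using Fin.lastCases with
    | last => simp [hji.ne]
    | cast i =>
      have : (j : ℕ) < i := hji
      simp only [ne_eq, (Fin.castSucc_lt_last i).ne, not_false_eq_true, updateRow_ne,
        coeffMatrix, of_apply, fam_castSucc, coeff_sub, coeff_X_pow, coeff_C_mul]
      rw [if_neg this.ne, if_neg (by omega), mul_zero, sub_zero]

theorem det_coeffMatrix_fam :
    (coeffMatrix (fam m l)).det = 1 + ∑ k ∈ Icc 1 m, topProd m l k * esymmVal m l k := by
  rw [det_eq_mul_adjugate_of_mulVec_eq_single _ (by simp [topProd_zero])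
      (coeffMatrix_fam_mulVec_topProd m l), adjugate_coeffMatrix_fam_last, mul_one,
    range_eq_Ico, sum_eq_sum_Ico_succ_bot (by omega), topProd_zero, esymmVal_zero, one_mul,
    zero_add, Ico_add_one_right_eq_Icc]

theorem one_add_sum_topProd_mul_esymmVal_pos (hl : ∀ i, 0 < l i) :
    0 < 1 + ∑ k ∈ Icc 1 m, topProd m l k * esymmVal m l k := by
  have hl' : ∀ i, 0 ≤ l i := fun i => (hl i).le
  have : 0 ≤ ∑ k ∈ Icc 1 m, topProd m l k * esymmVal m l k :=
    sum_nonneg fun k _ => mul_nonneg (prod_nonneg fun i _ => hl' i)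
      (sum_nonneg fun s _ => prod_nonneg fun i _ => hl' i)
  linarith

end

theorem stmt19_general (m : ℕ) (l : Fin m → ℝ) (hl : ∀ i, 0 < l i) :
    -- the coefficient matrix of the family `fam m l` in the basis `1, y, …, y^m`
    ((Matrix.of fun i j : Fin (m + 1) => (fam m l i).coeff (j : ℕ)).det
          = 1 + ∑ k ∈ Finset.Icc 1 m, topProd m l k * esymmVal m l k ∨
        (Matrix.of fun i j : Fin (m + 1) => (fam m l i).coeff (j : ℕ)).det
          = -(1 + ∑ k ∈ Finset.Icc 1 m, topProd m l k * esymmVal m l k)) ∧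
      (Matrix.of fun i j : Fin (m + 1) => (fam m l i).coeff (j : ℕ)).det ≠ 0 ∧
      LinearIndependent ℝ (fam m l) ∧
      Submodule.span ℝ (Set.range (fam m l)) = Polynomial.degreeLE ℝ (m : ℕ) := by
  have hdet := det_coeffMatrix_fam m l
  have hne : (coeffMatrix (fam m l)).det ≠ 0 :=
    hdet ▸ (one_add_sum_topProd_mul_esymmVal_pos m l hl).ne'
  have hli := linearIndependent_of_det_coeffMatrix_ne_zero hne
  exact ⟨.inl hdet, hne, hli, span_eq_degreeLE_of_linearIndependent hli (fam_mem_degreeLE m l)⟩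

theorem stmt19 (m : ℕ) (hm : 1 ≤ m) (l : Fin m → ℝ) (hl : ∀ i, 0 < l i) :
    -- the coefficient matrix of the family `fam m l` in the basis `1, y, …, y^m`
    ((Matrix.of fun i j : Fin (m + 1) => (fam m l i).coeff (j : ℕ)).det
          = 1 + ∑ k ∈ Finset.Icc 1 m, topProd m l k * esymmVal m l k ∨
        (Matrix.of fun i j : Fin (m + 1) => (fam m l i).coeff (j : ℕ)).det
          = -(1 + ∑ k ∈ Finset.Icc 1 m, topProd m l k * esymmVal m l k)) ∧
      (Matrix.of fun i j : Fin (m + 1) => (fam m l i).coeff (j : ℕ)).det ≠ 0 ∧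
      LinearIndependent ℝ (fam m l) ∧
      Submodule.span ℝ (Set.range (fam m l)) = Polynomial.degreeLE ℝ (m : ℕ) :=
  stmt19_general m l hl
end
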